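/- For integers m,n ≥ 0 and 0 ≤ k ≤ m+n+1, reals p, b, q: (1/k!) d^k/dε^k |_{ε=0} G_{1+εp}^{m,n,m+n+1}(b, b+εq) = G_p^{m,n,k}(b,q), where G is defined by G_ξ^{m,n,j}(x,y) := (1/j!) d^j/dt^j |_{t=0} ∫_0^{x+ty} s^m (1+tξ+s)^n ds. -/

import Mathlib

/-!
Expanding `(c + s)^n` binomially and integrating term by term shows that
`t ↦ ∫_0^{x+ty} s^m (1+tξ+s)^n ds` is the polynomial
`P_{ξ,x,y}(t) = ∑_i C(n,i)/(m+i+1) (1+ξt)^(n-i) (x+yt)^(m+i+1)`, so `G` reads off its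
coefficients. Each summand is a product of `m+n+1` affine factors, so the top coefficient
is `∑_i C(n,i)/(m+i+1) ξ^(n-i) y^(m+i+1)`; at `ξ = 1+εp`, `y = b+εq` this is exactly
`P_{p,b,q}(ε)`, whose `k`-th Taylor coefficient is `G_p^{m,n,k}(b,q)`.
-/

open Polynomial Finset

/-- The Fang–Lai polynomial G_ξ^{m,n,j}(x,y), defined as the j-th Taylor
coefficient in t at t = 0 of ∫_0^{x+ty} s^m (1+tξ+s)^n ds. -/
noncomputable def G (m n j : ℕ) (ξ x y : ℝ) : ℝ :=
  iteratedDeriv j (fun t => ∫ s in (0:ℝ)..(x + t * y), s ^ m * (1 + t * ξ + s) ^ n) 0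
    / (Nat.factorial j : ℝ)

section TaylorCoefficient

variable {𝕜 : Type*} [NontriviallyNormedField 𝕜]

theorem Polynomial.iteratedDeriv_eval (P : 𝕜[X]) (k : ℕ) :
    iteratedDeriv k (fun x => P.eval x) = fun x => (derivative^[k] P).eval x := by
  induction k with
  | zero => simp
  | succ k ih =>
    ext x
    rw [iteratedDeriv_succ, ih, Function.iterate_succ_apply', Polynomial.deriv]

theorem Polynomial.iteratedDeriv_eval_zero_div_factorial [CharZero 𝕜] (P : 𝕜[X]) (k : ℕ) :
    iteratedDeriv k (fun x => P.eval x) 0 / k.factorial = P.coeff k := by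
  simp only [iteratedDeriv_eval]
  rw [← coeff_zero_eq_eval_zero, coeff_iterate_derivative, zero_add, Nat.descFactorial_self,
    nsmul_eq_mul, mul_div_cancel_left₀ _ (Nat.cast_ne_zero.mpr k.factorial_ne_zero)]

end TaylorCoefficient

theorem Polynomial.coeff_affine_pow_mul_affine_pow {R : Type*} [CommSemiring R]
    (a b c d : R) (i j : ℕ) :
    ((C a * X + C b) ^ i * (C c * X + C d) ^ j).coeff (i + j) = a ^ i * c ^ j := by
  have hdeg : ∀ u v : R, (C u * X + C v).natDegree ≤ 1 := fun u v => natDegree_linear_le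
  have hpow : ∀ (u v : R) (e : ℕ), ((C u * X + C v) ^ e).coeff e = u ^ e := fun u v e => by
    simpa using coeff_pow_of_natDegree_le (m := e) (hdeg u v)
  have hpowDeg : ∀ (u v : R) (e : ℕ), ((C u * X + C v) ^ e).natDegree ≤ e := fun u v e => by
    simpa using natDegree_pow_le_of_le e (hdeg u v)
  rw [coeff_mul_add_eq_of_natDegree_le (hpowDeg a b i) (hpowDeg c d j), hpow, hpow]

theorem integral_pow_mul_add_pow (m n : ℕ) (c u : ℝ) :
    ∫ s in (0:ℝ)..u, s ^ m * (c + s) ^ n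
      = ∑ i ∈ range (n + 1),
          (n.choose i : ℝ) / (m + i + 1) * (c ^ (n - i) * u ^ (m + i + 1)) := by
  have hexpand : ∀ s : ℝ, s ^ m * (c + s) ^ n
      = ∑ i ∈ range (n + 1), (n.choose i * c ^ (n - i)) * s ^ (m + i) := fun s => by
    rw [add_comm, add_pow, mul_sum]
    refine sum_congr rfl fun i _ => ?_
    ring
  simp_rw [hexpand]
  rw [intervalIntegral.integral_finsetSum fun i _ =>
    (by fun_prop : Continuous _).intervalIntegrable _ _]
  refine sum_congr rfl fun i _ => ?_
  rw [intervalIntegral.integral_const_mul, integral_pow]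
  push_cast
  ring

noncomputable def fangLaiPoly (m n : ℕ) (ξ x y : ℝ) : ℝ[X] :=
  ∑ i ∈ range (n + 1), C ((n.choose i : ℝ) / (m + i + 1)) *
    ((C ξ * X + C 1) ^ (n - i) * (C y * X + C x) ^ (m + i + 1))

theorem eval_fangLaiPoly (m n : ℕ) (ξ x y t : ℝ) :
    (fangLaiPoly m n ξ x y).eval t
      = ∑ i ∈ range (n + 1), (n.choose i : ℝ) / (m + i + 1) *
          ((ξ * t + 1) ^ (n - i) * (y * t + x) ^ (m + i + 1)) := by
  simp [fangLaiPoly, eval_finsetSum]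

theorem eval_fangLaiPoly_eq_integral (m n : ℕ) (ξ x y t : ℝ) :
    (fangLaiPoly m n ξ x y).eval t
      = ∫ s in (0:ℝ)..(x + t * y), s ^ m * (1 + t * ξ + s) ^ n := by
  rw [eval_fangLaiPoly, integral_pow_mul_add_pow]
  refine sum_congr rfl fun i _ => ?_
  ring

theorem G_eq_coeff_fangLaiPoly (m n j : ℕ) (ξ x y : ℝ) :
    G m n j ξ x y = (fangLaiPoly m n ξ x y).coeff j := by
  simp_rw [G, ← eval_fangLaiPoly_eq_integral, iteratedDeriv_eval_zero_div_factorial]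

theorem coeff_fangLaiPoly_top (m n : ℕ) (ξ x y : ℝ) :
    (fangLaiPoly m n ξ x y).coeff (m + n + 1)
      = ∑ i ∈ range (n + 1),
          (n.choose i : ℝ) / (m + i + 1) * (ξ ^ (n - i) * y ^ (m + i + 1)) := by
  rw [fangLaiPoly, finsetSum_coeff]
  refine sum_congr rfl fun i hi => ?_
  have hsplit : m + n + 1 = (n - i) + (m + i + 1) := by
    have := mem_range.mp hi; omega
  rw [coeff_C_mul, hsplit, coeff_affine_pow_mul_affine_pow]

theorem G_top_eq_eval_fangLaiPoly (m n : ℕ) (p b q ε : ℝ) :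
    G m n (m + n + 1) (1 + ε * p) b (b + ε * q) = (fangLaiPoly m n p b q).eval ε := by
  rw [G_eq_coeff_fangLaiPoly, coeff_fangLaiPoly_top, eval_fangLaiPoly]
  refine sum_congr rfl fun i _ => ?_
  ring

theorem G_taylor_coefficient_general (m n k : ℕ) (p b q : ℝ) :
    iteratedDeriv k (fun ε => G m n (m + n + 1) (1 + ε * p) b (b + ε * q)) 0
        / (Nat.factorial k : ℝ)
      = G m n k p b q := by
  simp_rw [G_top_eq_eval_fangLaiPoly, iteratedDeriv_eval_zero_div_factorial,
    G_eq_coeff_fangLaiPoly]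

/-- The k-th ε-Taylor coefficient of G_{1+εp}^{m,n,m+n+1}(b, b+εq) equals
G_p^{m,n,k}(b,q). -/
theorem G_taylor_coefficient (m n k : ℕ) (hk : k ≤ m + n + 1) (p b q : ℝ) :
    iteratedDeriv k (fun ε => G m n (m + n + 1) (1 + ε * p) b (b + ε * q)) 0
        / (Nat.factorial k : ℝ)
      = G m n k p b q :=
  G_taylor_coefficient_general m n k p b q
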